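/- arXiv:2411.11301 — 2 statements merged into one kernel-verified Lean document; each statement's English description precedes it below -/
import Mathlib

section
/- Let V = σ_e² (I_N ⊗ I_2 ⊗ I_n ⊗ I_{N₁}) + σ₃² (I_N ⊗ J_2 ⊗ J_n ⊗ J_{N₁}) + σ₂² (I_N ⊗ I_2 ⊗ J_n ⊗ J_{N₁}) + σ₁² (I_N ⊗ I_2 ⊗ I_n ⊗ J_{N₁}), with σ_e² > 0 and σ₁², σ₂², σ₃² ≥ 0. Define λ₀ = σ_e², λ₁ = σ_e² + N₁σ₁², λ₂ = σ_e² + N₁σ₁² + nN₁σ₂², λ₃ = σ_e² + N₁σ₁² + nN₁σ₂² + 2nN₁σ₃². Then V is invertible and V⁻¹ = (1/λ₀) I_N ⊗ I_2 ⊗ I_n ⊗ C_{N₁} + (1/λ₁) I_N ⊗ I_2 ⊗ C_n ⊗ J̄_{N₁} + (1/λ₂) I_N ⊗ C_2 ⊗ J̄_n ⊗ J̄_{N₁} + (1/λ₃) I_N ⊗ J̄_2 ⊗ J̄_n ⊗ J̄_{N₁}. -/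
/-!
The matrices `P₀ = I ⊗ I ⊗ I ⊗ C`, `P₁ = I ⊗ I ⊗ C ⊗ J̄`, `P₂ = I ⊗ C ⊗ J̄ ⊗ J̄` and
`P₃ = I ⊗ J̄ ⊗ J̄ ⊗ J̄` form a complete family of orthogonal idempotents: going down one level of
the design, the identity is split by the complementary idempotents `C = 1 - J̄` and `J̄`, and the
previous family is tensored with `J̄`. Since `J_a = a J̄_a` and `I_a = C_a + J̄_a`, expanding gives
`V = ∑ λᵢ Pᵢ`, and for such a spectral decomposition with all `λᵢ ≠ 0` the inverse is
`∑ λᵢ⁻¹ Pᵢ`.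
-/

open Matrix
open scoped Kronecker

noncomputable def Jmat (a : ℕ) : Matrix (Fin a) (Fin a) ℝ := fun _ _ => 1

noncomputable def Jbar (a : ℕ) : Matrix (Fin a) (Fin a) ℝ := (a : ℝ)⁻¹ • Jmat a

noncomputable def Cmat (a : ℕ) : Matrix (Fin a) (Fin a) ℝ :=
  (1 : Matrix (Fin a) (Fin a) ℝ) - Jbar a

/-- The covariance matrix
`V = σ_e² (I_N ⊗ I_2 ⊗ I_n ⊗ I_{N₁}) + σ₃² (I_N ⊗ J_2 ⊗ J_n ⊗ J_{N₁})
   + σ₂² (I_N ⊗ I_2 ⊗ J_n ⊗ J_{N₁}) + σ₁² (I_N ⊗ I_2 ⊗ I_n ⊗ J_{N₁})`. -/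
noncomputable def Vmat (N n N₁ : ℕ) (σe2 σ12 σ22 σ32 : ℝ) :
    Matrix (((Fin N × Fin 2) × Fin n) × Fin N₁) (((Fin N × Fin 2) × Fin n) × Fin N₁) ℝ :=
  σe2 • ((((1 : Matrix (Fin N) (Fin N) ℝ) ⊗ₖ (1 : Matrix (Fin 2) (Fin 2) ℝ)) ⊗ₖ
            (1 : Matrix (Fin n) (Fin n) ℝ)) ⊗ₖ (1 : Matrix (Fin N₁) (Fin N₁) ℝ))
  + σ32 • ((((1 : Matrix (Fin N) (Fin N) ℝ) ⊗ₖ Jmat 2) ⊗ₖ Jmat n) ⊗ₖ Jmat N₁)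
  + σ22 • ((((1 : Matrix (Fin N) (Fin N) ℝ) ⊗ₖ (1 : Matrix (Fin 2) (Fin 2) ℝ)) ⊗ₖ
            Jmat n) ⊗ₖ Jmat N₁)
  + σ12 • ((((1 : Matrix (Fin N) (Fin N) ℝ) ⊗ₖ (1 : Matrix (Fin 2) (Fin 2) ℝ)) ⊗ₖ
            (1 : Matrix (Fin n) (Fin n) ℝ)) ⊗ₖ Jmat N₁)


theorem OrthogonalIdempotents.sum_smul_mul_sum_smul {R A I : Type*} [CommSemiring R] [Semiring A]
    [Algebra R A] [Fintype I] {e : I → A} (he : OrthogonalIdempotents e) (a b : I → R) :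
    (∑ i, a i • e i) * ∑ i, b i • e i = ∑ i, (a i * b i) • e i := by
  classical
  simp [Finset.sum_mul, Finset.mul_sum, he.mul_eq, smul_smul, mul_comm]

theorem CompleteOrthogonalIdempotents.sum_smul_mul_sum_inv_smul {K A I : Type*} [Field K]
    [Semiring A] [Algebra K A] [Fintype I] {e : I → A} (he : CompleteOrthogonalIdempotents e)
    {c : I → K} (hc : ∀ i, c i ≠ 0) :
    (∑ i, c i • e i) * ∑ i, (c i)⁻¹ • e i = 1 := by
  simp [he.sum_smul_mul_sum_smul, hc, he.complete]

theorem CompleteOrthogonalIdempotents.isUnit_sum_smul {K A I : Type*} [Field K]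
    [Semiring A] [Algebra K A] [Fintype I] {e : I → A} (he : CompleteOrthogonalIdempotents e)
    {c : I → K} (hc : ∀ i, c i ≠ 0) :
    IsUnit (∑ i, c i • e i) := by
  refine isUnit_iff_exists.mpr ⟨_, he.sum_smul_mul_sum_inv_smul hc, ?_⟩
  simpa using he.sum_smul_mul_sum_inv_smul (c := fun i ↦ (c i)⁻¹) (by simpa using hc)

theorem Matrix.sum_kronecker {ι R l m n p : Type*} [Fintype ι] [NonUnitalNonAssocSemiring R]
    (A : ι → Matrix l m R) (B : Matrix n p R) :
    (∑ i, A i) ⊗ₖ B = ∑ i, A i ⊗ₖ B := by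
  ext; simp [Matrix.sum_apply, Finset.sum_mul]

theorem CompleteOrthogonalIdempotents.kronecker_cons {R m n : Type*} [CommSemiring R]
    [Fintype m] [DecidableEq m] [Fintype n] [DecidableEq n] {k : ℕ} {e : Fin k → Matrix m m R}
    (he : CompleteOrthogonalIdempotents e) {p q : Matrix n n R}
    (hpq : CompleteOrthogonalIdempotents ![p, q]) :
    CompleteOrthogonalIdempotents
      (Fin.cons ((1 : Matrix m m R) ⊗ₖ q) fun i ↦ e i ⊗ₖ p :
        Fin (k + 1) → Matrix (m × n) (m × n) R) := by
  obtain ⟨hp_mul_q, hq_mul_p, hp_add_q⟩ := CompleteOrthogonalIdempotents.pair_iff'ₛ.mp hpq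
  rw [CompleteOrthogonalIdempotents.iff_ortho_complete]
  constructor
  · intro i j hij
    cases i using Fin.cases <;> cases j using Fin.cases
    · exact absurd rfl hij
    · simp [← mul_kronecker_mul, hq_mul_p]
    · simp [← mul_kronecker_mul, hp_mul_q]
    · simp [← mul_kronecker_mul, he.ortho (Fin.succ_injective _ |>.ne_iff.mp hij)]
  · simp [Fin.sum_univ_succ, ← Matrix.sum_kronecker, he.complete, ← kronecker_add, add_comm q,
      hp_add_q]

theorem Jmat_mul_Jmat (a : ℕ) : Jmat a * Jmat a = (a : ℝ) • Jmat a := by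
  ext; simp [Matrix.mul_apply, Jmat]

theorem Jmat_eq_smul_Jbar (a : ℕ) : Jmat a = (a : ℝ) • Jbar a := by
  rcases eq_or_ne a 0 with rfl | ha
  · exact Subsingleton.elim _ _
  · simp [Jbar, smul_smul, ha]

theorem isIdempotentElem_Jbar (a : ℕ) : IsIdempotentElem (Jbar a) := by
  rcases eq_or_ne a 0 with rfl | ha
  · exact Subsingleton.elim _ _
  · simp [IsIdempotentElem, Jbar, Jmat_mul_Jmat, smul_smul, ha]

theorem completeOrthogonalIdempotents_Jbar_Cmat (a : ℕ) :
    CompleteOrthogonalIdempotents ![Jbar a, Cmat a] :=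
  .of_isIdempotentElem (isIdempotentElem_Jbar a)

noncomputable def spectralProjection (N n N₁ : ℕ) :
    Fin 4 → Matrix (((Fin N × Fin 2) × Fin n) × Fin N₁) (((Fin N × Fin 2) × Fin n) × Fin N₁) ℝ :=
  ![(((1 : Matrix (Fin N) (Fin N) ℝ) ⊗ₖ (1 : Matrix (Fin 2) (Fin 2) ℝ)) ⊗ₖ
      (1 : Matrix (Fin n) (Fin n) ℝ)) ⊗ₖ Cmat N₁,
    (((1 : Matrix (Fin N) (Fin N) ℝ) ⊗ₖ (1 : Matrix (Fin 2) (Fin 2) ℝ)) ⊗ₖ Cmat n) ⊗ₖ Jbar N₁,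
    (((1 : Matrix (Fin N) (Fin N) ℝ) ⊗ₖ Cmat 2) ⊗ₖ Jbar n) ⊗ₖ Jbar N₁,
    (((1 : Matrix (Fin N) (Fin N) ℝ) ⊗ₖ Jbar 2) ⊗ₖ Jbar n) ⊗ₖ Jbar N₁]

theorem completeOrthogonalIdempotents_spectralProjection (N n N₁ : ℕ) :
    CompleteOrthogonalIdempotents (spectralProjection N n N₁) := by
  have hN : CompleteOrthogonalIdempotents ![(1 : Matrix (Fin N) (Fin N) ℝ)] :=
    CompleteOrthogonalIdempotents.unique_iff.mpr rfl
  convert ((hN.kronecker_cons (completeOrthogonalIdempotents_Jbar_Cmat 2)).kronecker_cons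
    (completeOrthogonalIdempotents_Jbar_Cmat n)).kronecker_cons
    (completeOrthogonalIdempotents_Jbar_Cmat N₁) using 1
  ext i : 1
  fin_cases i <;> simp [spectralProjection] <;> rfl

theorem Vmat_eq_sum_smul_spectralProjection (N n N₁ : ℕ) (σe2 σ12 σ22 σ32 : ℝ) :
    Vmat N n N₁ σe2 σ12 σ22 σ32 =
      ∑ i, ![σe2, σe2 + N₁ * σ12, σe2 + N₁ * σ12 + n * N₁ * σ22,
        σe2 + N₁ * σ12 + n * N₁ * σ22 + 2 * n * N₁ * σ32] i • spectralProjection N n N₁ i := by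
  have hone (a : ℕ) : (1 : Matrix (Fin a) (Fin a) ℝ) = Cmat a + Jbar a := (sub_add_cancel _ _).symm
  simp only [Vmat, spectralProjection, Fin.sum_univ_four, Jmat_eq_smul_Jbar, hone 2, hone n,
    hone N₁, kronecker_smul, smul_kronecker, add_kronecker, kronecker_add, Matrix.cons_val]
  module

theorem V_inverse_general (N n N₁ : ℕ)
    (σe2 σ12 σ22 σ32 : ℝ) (hσe : 0 < σe2) (h1 : 0 ≤ σ12) (h2 : 0 ≤ σ22) (h3 : 0 ≤ σ32)
    (l0 l1 l2 l3 : ℝ)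
    (hl0 : l0 = σe2) (hl1 : l1 = σe2 + N₁ * σ12)
    (hl2 : l2 = σe2 + N₁ * σ12 + n * N₁ * σ22)
    (hl3 : l3 = σe2 + N₁ * σ12 + n * N₁ * σ22 + 2 * n * N₁ * σ32) :
    IsUnit (Vmat N n N₁ σe2 σ12 σ22 σ32) ∧
    (Vmat N n N₁ σe2 σ12 σ22 σ32)⁻¹ =
      (1 / l0) • ((((1 : Matrix (Fin N) (Fin N) ℝ) ⊗ₖ (1 : Matrix (Fin 2) (Fin 2) ℝ)) ⊗ₖ
            (1 : Matrix (Fin n) (Fin n) ℝ)) ⊗ₖ Cmat N₁)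
      + (1 / l1) • ((((1 : Matrix (Fin N) (Fin N) ℝ) ⊗ₖ (1 : Matrix (Fin 2) (Fin 2) ℝ)) ⊗ₖ
            Cmat n) ⊗ₖ Jbar N₁)
      + (1 / l2) • ((((1 : Matrix (Fin N) (Fin N) ℝ) ⊗ₖ Cmat 2) ⊗ₖ Jbar n) ⊗ₖ Jbar N₁)
      + (1 / l3) • ((((1 : Matrix (Fin N) (Fin N) ℝ) ⊗ₖ Jbar 2) ⊗ₖ Jbar n) ⊗ₖ Jbar N₁) := by
  have hl : ∀ i, ![l0, l1, l2, l3] i ≠ 0 := by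
    intro i; fin_cases i <;> dsimp <;> subst_vars <;> positivity
  have hP := completeOrthogonalIdempotents_spectralProjection N n N₁
  have hV : Vmat N n N₁ σe2 σ12 σ22 σ32 =
      ∑ i, ![l0, l1, l2, l3] i • spectralProjection N n N₁ i := by
    rw [Vmat_eq_sum_smul_spectralProjection, hl0, hl1, hl2, hl3]
  refine ⟨hV ▸ hP.isUnit_sum_smul hl,
    (Matrix.inv_eq_right_inv (hV ▸ hP.sum_smul_mul_sum_inv_smul hl)).trans ?_⟩
  simp [Fin.sum_univ_four, spectralProjection, one_div]

/-- `V` is invertible, and its inverse is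
`(1/λ₀) I_N ⊗ I_2 ⊗ I_n ⊗ C_{N₁} + (1/λ₁) I_N ⊗ I_2 ⊗ C_n ⊗ J̄_{N₁}
 + (1/λ₂) I_N ⊗ C_2 ⊗ J̄_n ⊗ J̄_{N₁} + (1/λ₃) I_N ⊗ J̄_2 ⊗ J̄_n ⊗ J̄_{N₁}`. -/
theorem V_inverse (N n N₁ : ℕ) (hN : 0 < N) (hn : 0 < n) (hN₁ : 0 < N₁)
    (σe2 σ12 σ22 σ32 : ℝ) (hσe : 0 < σe2) (h1 : 0 ≤ σ12) (h2 : 0 ≤ σ22) (h3 : 0 ≤ σ32)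
    (l0 l1 l2 l3 : ℝ)
    (hl0 : l0 = σe2) (hl1 : l1 = σe2 + N₁ * σ12)
    (hl2 : l2 = σe2 + N₁ * σ12 + n * N₁ * σ22)
    (hl3 : l3 = σe2 + N₁ * σ12 + n * N₁ * σ22 + 2 * n * N₁ * σ32) :
    IsUnit (Vmat N n N₁ σe2 σ12 σ22 σ32) ∧
    (Vmat N n N₁ σe2 σ12 σ22 σ32)⁻¹ =
      (1 / l0) • ((((1 : Matrix (Fin N) (Fin N) ℝ) ⊗ₖ (1 : Matrix (Fin 2) (Fin 2) ℝ)) ⊗ₖ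
            (1 : Matrix (Fin n) (Fin n) ℝ)) ⊗ₖ Cmat N₁)
      + (1 / l1) • ((((1 : Matrix (Fin N) (Fin N) ℝ) ⊗ₖ (1 : Matrix (Fin 2) (Fin 2) ℝ)) ⊗ₖ
            Cmat n) ⊗ₖ Jbar N₁)
      + (1 / l2) • ((((1 : Matrix (Fin N) (Fin N) ℝ) ⊗ₖ Cmat 2) ⊗ₖ Jbar n) ⊗ₖ Jbar N₁)
      + (1 / l3) • ((((1 : Matrix (Fin N) (Fin N) ℝ) ⊗ₖ Jbar 2) ⊗ₖ Jbar n) ⊗ₖ Jbar N₁) :=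
  V_inverse_general N n N₁ σe2 σ12 σ22 σ32 hσe h1 h2 h3 l0 l1 l2 l3 hl0 hl1 hl2 hl3
end

section
/- In the setting of the previous statement, assuming u_i ~ N(0, σ₃²), u_{g(i)} ~ N(0, σ₂²), u_{j(ig)} ~ N(0, σ₁²), ε_{igjk} ~ N(0, σ_e²), all mutually independent across all indices, the variance of δ̂ = (Ȳᵀ_{·1··} − Ȳᶜ_{·1··}) − (Ȳᵀ_{·2··} − Ȳᶜ_{·2··}) equals (4 / (N₃ n N₁)) · (σ_e² + N₁ σ₁² + n N₁ σ₂²). -/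
open MeasureTheory

/-!
Every cluster contributes to both subgroups with opposite signs, so the intercept, the cluster
effects `u_i` and all fixed effects except `δ` cancel in `δ̂`: the estimation error `δ̂ - δ` is a
linear combination of the level-two effects, the level-one effects and the residuals, with weights
`±1/N₃`, `±1/(N₃ n)` and `±1/(N₃ n N₁)`. These components form an orthogonal family in `L²(μ)`,
so the mean squared error is `∑ w² σ² = 4 N₃ (σ₂²/N₃² + n σ₁²/(N₃ n)² + n N₁ σₑ²/(N₃ n N₁)²)`.
-/

universe u v w

section OrthogonalFamily

variable {Ω : Type u} {ι : Type v} {κ : Type w} [MeasurableSpace Ω] (μ : Measure Ω)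
  [DecidableEq ι] [DecidableEq κ]

def IsOrthogonalFamily (Z : ι → Ω → ℝ) (v : ι → ℝ) : Prop :=
  ∀ a b, Integrable (fun ω => Z a ω * Z b ω) μ ∧
    ∫ ω, Z a ω * Z b ω ∂μ = if a = b then v a else 0

variable {μ}

theorem IsOrthogonalFamily.sumElim {Z₁ : ι → Ω → ℝ} {Z₂ : κ → Ω → ℝ} {v₁ : ι → ℝ} {v₂ : κ → ℝ}
    (h₁ : IsOrthogonalFamily μ Z₁ v₁) (h₂ : IsOrthogonalFamily μ Z₂ v₂)
    (h₁₂ : ∀ a b, Integrable (fun ω => Z₁ a ω * Z₂ b ω) μ ∧ ∫ ω, Z₁ a ω * Z₂ b ω ∂μ = 0) :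
    IsOrthogonalFamily μ (Sum.elim Z₁ Z₂) (Sum.elim v₁ v₂) := by
  rintro (a | a) (b | b)
  · simpa using h₁ a b
  · simpa using h₁₂ a b
  · simpa [mul_comm] using h₁₂ b a
  · simpa using h₂ a b

theorem IsOrthogonalFamily.integral_sq_sum [Fintype ι] {Z : ι → Ω → ℝ} {v : ι → ℝ}
    (h : IsOrthogonalFamily μ Z v) (w : ι → ℝ) :
    ∫ ω, (∑ a, w a * Z a ω) ^ 2 ∂μ = ∑ a, w a ^ 2 * v a := by
  have hint : ∀ a b, Integrable (fun ω => w a * w b * (Z a ω * Z b ω)) μ :=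
    fun a b => (h a b).1.const_mul _
  calc ∫ ω, (∑ a, w a * Z a ω) ^ 2 ∂μ
      = ∫ ω, ∑ a, ∑ b, w a * w b * (Z a ω * Z b ω) ∂μ := by
        congr 1; funext ω
        rw [sq, Finset.sum_mul_sum]
        simp only [mul_mul_mul_comm]
    _ = ∑ a, ∑ b, w a * w b * ∫ ω, Z a ω * Z b ω ∂μ := by
        rw [integral_finsetSum _ fun a _ => integrable_finsetSum _ fun b _ => hint a b]
        simp only [integral_finsetSum _ fun b _ => hint _ b, integral_const_mul]
    _ = ∑ a, w a ^ 2 * v a := by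
        simp [(h _ _).2, sq]

theorem sum_fin_two_mul_ite_lt (N : ℕ) (a b : ℝ) :
    ∑ i : Fin (2 * N), (if (i : ℕ) < N then a else b) = N * a + N * b := by
  rw [Fin.sum_univ_eq_sum_range (fun i => if i < N then a else b), two_mul, Finset.sum_range_add]
  simp +contextual [Finset.sum_ite_of_true]

section Design

variable {N₃ n N₁ : ℕ}

def treatmentSign (N₃ : ℕ) (i : Fin (2 * N₃)) : ℝ := if (i : ℕ) < N₃ then 1 else -1

def subgroupSign (g : Fin 2) : ℝ := if g = 0 then 1 else -1

theorem treatmentSign_sq (i : Fin (2 * N₃)) : treatmentSign N₃ i ^ 2 = 1 := by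
  unfold treatmentSign; split_ifs <;> norm_num

theorem subgroupSign_sq (g : Fin 2) : subgroupSign g ^ 2 = 1 := by
  unfold subgroupSign; split_ifs <;> norm_num

theorem sum_subgroupSign_mul (f : Fin 2 → ℝ) : ∑ g, subgroupSign g * f g = f 0 - f 1 := by
  simp [Fin.sum_univ_two, subgroupSign, sub_eq_add_neg]

/-- `armMean y g true` and `armMean y g false` are `Ȳᵀ_{·g··}` and `Ȳᶜ_{·g··}`. -/
noncomputable def armMean (y : Fin (2 * N₃) → Fin 2 → Fin n → Fin N₁ → ℝ) (g : Fin 2)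
    (t : Bool) : ℝ :=
  (1 / (N₃ * n * N₁ : ℝ)) * ∑ i : Fin (2 * N₃), ∑ j : Fin n, ∑ k : Fin N₁,
    (if decide ((i : ℕ) < N₃) = t then y i g j k else 0)

noncomputable def cellWeight (N₃ n N₁ : ℕ) (i : Fin (2 * N₃)) (g : Fin 2) : ℝ :=
  treatmentSign N₃ i * subgroupSign g / (N₃ * n * N₁)

theorem armMean_true_sub_false (y : Fin (2 * N₃) → Fin 2 → Fin n → Fin N₁ → ℝ) (g : Fin 2) :
    armMean y g true - armMean y g false =
      (1 / (N₃ * n * N₁ : ℝ)) * ∑ i, ∑ j, ∑ k, treatmentSign N₃ i * y i g j k := by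
  simp only [armMean, ← mul_sub, ← Finset.sum_sub_distrib]
  congr 1
  refine Finset.sum_congr rfl fun i _ => ?_
  by_cases hi : (i : ℕ) < N₃ <;> simp [treatmentSign, hi]

theorem subgroupContrast_eq_sum_cellWeight_mul (y : Fin (2 * N₃) → Fin 2 → Fin n → Fin N₁ → ℝ) :
    (armMean y 0 true - armMean y 0 false) - (armMean y 1 true - armMean y 1 false) =
      ∑ i, ∑ g, ∑ j, ∑ k, cellWeight N₃ n N₁ i g * y i g j k := by
  rw [armMean_true_sub_false, armMean_true_sub_false, ← mul_sub, ← Finset.sum_sub_distrib,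
    Finset.mul_sum]
  refine Finset.sum_congr rfl fun i _ => ?_
  simp only [← Finset.mul_sum, Fin.sum_univ_two, cellWeight, subgroupSign, Fin.isValue,
    ↓reduceIte, one_ne_zero]
  ring

theorem sum_cellWeight_mul_eq_of_sub (hN₃ : N₃ ≠ 0) (hn : n ≠ 0) (hN₁ : N₁ ≠ 0) {τ δ : ℝ}
    {X : Fin (2 * N₃) → ℝ} (hX : ∀ i, X i = if (i : ℕ) < N₃ then 1 else 0)
    (F : Fin (2 * N₃) → Fin 2 → ℝ) (hF : ∀ i, F i 0 - F i 1 = τ + δ * X i) :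
    ∑ i, ∑ g, ∑ _j : Fin n, ∑ _k : Fin N₁, cellWeight N₃ n N₁ i g * F i g = δ := by
  have hsign : ∀ i, treatmentSign N₃ i * (τ + δ * X i) = if (i : ℕ) < N₃ then τ + δ else -τ := by
    intro i; rw [hX]; unfold treatmentSign; split_ifs <;> ring
  calc _ = ∑ i, treatmentSign N₃ i / N₃ * ∑ g, subgroupSign g * F i g := by
        refine Finset.sum_congr rfl fun i _ => ?_
        simp only [Finset.sum_const, Finset.card_univ, Fintype.card_fin, nsmul_eq_mul,
          Finset.mul_sum]
        refine Finset.sum_congr rfl fun g _ => ?_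
        rw [cellWeight]
        field_simp
    _ = δ := by
        simp only [sum_subgroupSign_mul, hF, div_mul_eq_mul_div, ← Finset.sum_div, hsign,
          sum_fin_two_mul_ite_lt]
        field_simp
        ring

variable {Ω : Type u}

abbrev ComponentIndex (N₃ n N₁ : ℕ) : Type :=
  (Fin (2 * N₃) × Fin 2) ⊕ (Fin (2 * N₃) × Fin 2 × Fin n) ⊕
    (Fin (2 * N₃) × Fin 2 × Fin n × Fin N₁)

def components (ug : Fin (2 * N₃) → Fin 2 → Ω → ℝ) (uj : Fin (2 * N₃) → Fin 2 → Fin n → Ω → ℝ)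
    (eps : Fin (2 * N₃) → Fin 2 → Fin n → Fin N₁ → Ω → ℝ) : ComponentIndex N₃ n N₁ → Ω → ℝ :=
  Sum.elim (fun p => ug p.1 p.2)
    (Sum.elim (fun p => uj p.1 p.2.1 p.2.2) (fun p => eps p.1 p.2.1 p.2.2.1 p.2.2.2))

noncomputable def contrastWeight (N₃ n N₁ : ℕ) : ComponentIndex N₃ n N₁ → ℝ :=
  Sum.elim (fun p => n * N₁ * cellWeight N₃ n N₁ p.1 p.2)
    (Sum.elim (fun p => N₁ * cellWeight N₃ n N₁ p.1 p.2.1) (fun p => cellWeight N₃ n N₁ p.1 p.2.1))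

theorem sum_contrastWeight_mul_components (ug : Fin (2 * N₃) → Fin 2 → Ω → ℝ)
    (uj : Fin (2 * N₃) → Fin 2 → Fin n → Ω → ℝ)
    (eps : Fin (2 * N₃) → Fin 2 → Fin n → Fin N₁ → Ω → ℝ) (ω : Ω) :
    ∑ t, contrastWeight N₃ n N₁ t * components ug uj eps t ω =
      ∑ i, ∑ g, ∑ j, ∑ k, cellWeight N₃ n N₁ i g * (ug i g ω + (uj i g j ω + eps i g j k ω)) := by
  simp only [contrastWeight, components, Fintype.sum_sum_type, Sum.elim_inl, Sum.elim_inr,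
    Fintype.sum_prod_type, mul_add, Finset.sum_add_distrib, Finset.sum_const, Finset.card_univ,
    Fintype.card_fin, nsmul_eq_mul]
  ring_nf

theorem sum_contrastWeight_sq_mul (hN₃ : N₃ ≠ 0) (hn : n ≠ 0) (hN₁ : N₁ ≠ 0) (a b c : ℝ) :
    ∑ t, contrastWeight N₃ n N₁ t ^ 2 * Sum.elim (fun _ => a) (Sum.elim (fun _ => b) fun _ => c) t =
      4 / (N₃ * n * N₁ : ℝ) * (c + N₁ * b + n * N₁ * a) := by
  simp only [contrastWeight, cellWeight, Fintype.sum_sum_type, Sum.elim_inl, Sum.elim_inr,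
    mul_pow, div_pow, treatmentSign_sq, subgroupSign_sq, mul_one, Finset.sum_const,
    Finset.card_univ, Fintype.card_prod, Fintype.card_fin, nsmul_eq_mul, Nat.cast_mul,
    Nat.cast_ofNat]
  field_simp
  ring

theorem subgroupContrast_sub_eq_sum_contrastWeight_mul (hN₃ : N₃ ≠ 0) (hn : n ≠ 0) (hN₁ : N₁ ≠ 0)
    {β₀ τ ξ δ : ℝ} {L : Fin 2 → ℝ} (hL : L 0 = 1 ∧ L 1 = 0)
    {X : Fin (2 * N₃) → ℝ} (hX : ∀ i, X i = if (i : ℕ) < N₃ then 1 else 0)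
    (u : Fin (2 * N₃) → Ω → ℝ) (ug : Fin (2 * N₃) → Fin 2 → Ω → ℝ)
    (uj : Fin (2 * N₃) → Fin 2 → Fin n → Ω → ℝ)
    (eps : Fin (2 * N₃) → Fin 2 → Fin n → Fin N₁ → Ω → ℝ)
    {y : Fin (2 * N₃) → Fin 2 → Fin n → Fin N₁ → ℝ} (ω : Ω)
    (hy : ∀ i g j k, y i g j k =
      β₀ + τ * L g + ξ * X i + δ * L g * X i + u i ω + ug i g ω + uj i g j ω + eps i g j k ω) :
    ((armMean y 0 true - armMean y 0 false) - (armMean y 1 true - armMean y 1 false)) - δ =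
      ∑ t, contrastWeight N₃ n N₁ t * components ug uj eps t ω := by
  -- `F` is kept opaque so that `mul_add` below does not split the fixed part.
  obtain ⟨F, hF⟩ : ∃ F : Fin (2 * N₃) → Fin 2 → ℝ,
      ∀ i g, F i g = β₀ + τ * L g + ξ * X i + δ * L g * X i + u i ω := ⟨_, fun _ _ => rfl⟩
  have hFsub : ∀ i, F i 0 - F i 1 = τ + δ * X i := fun i => by
    rw [hF, hF, hL.1, hL.2]; ring
  have hsplit : ∀ i g j k, y i g j k = F i g + (ug i g ω + (uj i g j ω + eps i g j k ω)) :=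
    fun i g j k => by rw [hy, hF]; ring
  simp only [subgroupContrast_eq_sum_cellWeight_mul, hsplit, mul_add, Finset.sum_add_distrib,
    sum_contrastWeight_mul_components, sum_cellWeight_mul_eq_of_sub hN₃ hn hN₁ hX F hFsub]
  ring

end Design

theorem delta_hat_variance_general {Ω : Type*} [MeasurableSpace Ω]
    (μ : Measure Ω)
    (N₃ n N₁ : ℕ) (hN₃ : 0 < N₃) (hn : 0 < n) (hN₁ : 0 < N₁)
    (β₀ τ ξ δ : ℝ) (σ22 σ12 σe2 : ℝ)
    (u : Fin (2 * N₃) → Ω → ℝ) (ug : Fin (2 * N₃) → Fin 2 → Ω → ℝ)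
    (uj : Fin (2 * N₃) → Fin 2 → Fin n → Ω → ℝ)
    (eps : Fin (2 * N₃) → Fin 2 → Fin n → Fin N₁ → Ω → ℝ)
    -- second moments within each family
    (h2ug : ∀ i g i' g', Integrable (fun ω => ug i g ω * ug i' g' ω) μ ∧
      ∫ ω, ug i g ω * ug i' g' ω ∂μ = if i = i' ∧ g = g' then σ22 else 0)
    (h2uj : ∀ i g j i' g' j', Integrable (fun ω => uj i g j ω * uj i' g' j' ω) μ ∧
      ∫ ω, uj i g j ω * uj i' g' j' ω ∂μ = if i = i' ∧ g = g' ∧ j = j' then σ12 else 0)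
    (h2eps : ∀ i g j k i' g' j' k', Integrable (fun ω => eps i g j k ω * eps i' g' j' k' ω) μ ∧
      ∫ ω, eps i g j k ω * eps i' g' j' k' ω ∂μ =
        if i = i' ∧ g = g' ∧ j = j' ∧ k = k' then σe2 else 0)
    -- cross-family second moments vanish (independence)
    (hc4 : ∀ i g i' g' j', Integrable (fun ω => ug i g ω * uj i' g' j' ω) μ ∧
      ∫ ω, ug i g ω * uj i' g' j' ω ∂μ = 0)
    (hc5 : ∀ i g i' g' j' k', Integrable (fun ω => ug i g ω * eps i' g' j' k' ω) μ ∧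
      ∫ ω, ug i g ω * eps i' g' j' k' ω ∂μ = 0)
    (hc6 : ∀ i g j i' g' j' k', Integrable (fun ω => uj i g j ω * eps i' g' j' k' ω) μ ∧
      ∫ ω, uj i g j ω * eps i' g' j' k' ω ∂μ = 0)
    (L : Fin 2 → ℝ) (hL : L 0 = 1 ∧ L 1 = 0)
    (X : Fin (2 * N₃) → ℝ) (hX : ∀ i, X i = if (i : ℕ) < N₃ then 1 else 0)
    (Y : Fin (2 * N₃) → Fin 2 → Fin n → Fin N₁ → Ω → ℝ)
    (hY : ∀ i g j k ω, Y i g j k ω =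
      β₀ + τ * L g + ξ * X i + δ * L g * X i + u i ω + ug i g ω + uj i g j ω + eps i g j k ω)
    (Ybar : Fin 2 → Bool → Ω → ℝ)
    (hYbar : ∀ g t ω, Ybar g t ω =
      (1 / (N₃ * n * N₁ : ℝ)) * ∑ i : Fin (2 * N₃), ∑ j : Fin n, ∑ k : Fin N₁,
        (if decide ((i : ℕ) < N₃) = t then Y i g j k ω else 0)) :
    ∫ ω, (((Ybar 0 true ω - Ybar 0 false ω) - (Ybar 1 true ω - Ybar 1 false ω)) - δ)^2 ∂μ =
      4 / (N₃ * n * N₁ : ℝ) * (σe2 + N₁ * σ12 + n * N₁ * σ22) := by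
  have hZ : IsOrthogonalFamily μ (components ug uj eps)
      (Sum.elim (fun _ => σ22) (Sum.elim (fun _ => σ12) fun _ => σe2)) := by
    refine .sumElim (fun p q => ?_) (.sumElim (fun p q => ?_) (fun p q => ?_) ?_) ?_
    · simpa only [Prod.ext_iff] using h2ug p.1 p.2 q.1 q.2
    · simpa only [Prod.ext_iff] using h2uj p.1 p.2.1 p.2.2 q.1 q.2.1 q.2.2
    · simpa only [Prod.ext_iff] using h2eps p.1 p.2.1 p.2.2.1 p.2.2.2 q.1 q.2.1 q.2.2.1 q.2.2.2
    · exact fun p q => hc6 p.1 p.2.1 p.2.2 q.1 q.2.1 q.2.2.1 q.2.2.2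
    · rintro p (q | q)
      exacts [hc4 p.1 p.2 q.1 q.2.1 q.2.2, hc5 p.1 p.2 q.1 q.2.1 q.2.2.1 q.2.2.2]
  have hδ : ∀ ω, ((Ybar 0 true ω - Ybar 0 false ω) - (Ybar 1 true ω - Ybar 1 false ω)) - δ =
      ∑ t, contrastWeight N₃ n N₁ t * components ug uj eps t ω := fun ω => by
    have hmean : ∀ g t, Ybar g t ω = armMean (fun i g j k => Y i g j k ω) g t :=
      fun g t => hYbar g t ω
    simp only [hmean]
    exact subgroupContrast_sub_eq_sum_contrastWeight_mul hN₃.ne' hn.ne' hN₁.ne' hL hX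
      u ug uj eps ω (hY · · · · ω)
  simp only [hδ, hZ.integral_sq_sum, sum_contrastWeight_sq_mul hN₃.ne' hn.ne' hN₁.ne']

/-- In the balanced three-level CRT model with subgrouping at level two and
mutually independent Gaussian random components `u_i ~ N(0,σ₃²)`,
`u_{g(i)} ~ N(0,σ₂²)`, `u_{j(ig)} ~ N(0,σ₁²)`, `ε_{igjk} ~ N(0,σ_e²)`
(formalized through the resulting first- and second-moment structure), the
variance of `δ̂ = (Ȳᵀ_{·1··} − Ȳᶜ_{·1··}) − (Ȳᵀ_{·2··} − Ȳᶜ_{·2··})` equals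
`(4/(N₃ n N₁)) (σ_e² + N₁σ₁² + nN₁σ₂²)`. -/
theorem delta_hat_variance {Ω : Type*} [MeasurableSpace Ω]
    (μ : Measure Ω) [IsProbabilityMeasure μ]
    (N₃ n N₁ : ℕ) (hN₃ : 0 < N₃) (hn : 0 < n) (hN₁ : 0 < N₁)
    (β₀ τ ξ δ : ℝ) (σ32 σ22 σ12 σe2 : ℝ)
    (u : Fin (2 * N₃) → Ω → ℝ) (ug : Fin (2 * N₃) → Fin 2 → Ω → ℝ)
    (uj : Fin (2 * N₃) → Fin 2 → Fin n → Ω → ℝ)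
    (eps : Fin (2 * N₃) → Fin 2 → Fin n → Fin N₁ → Ω → ℝ)
    -- zero means
    (hu : ∀ i, Integrable (u i) μ ∧ ∫ ω, u i ω ∂μ = 0)
    (hug : ∀ i g, Integrable (ug i g) μ ∧ ∫ ω, ug i g ω ∂μ = 0)
    (huj : ∀ i g j, Integrable (uj i g j) μ ∧ ∫ ω, uj i g j ω ∂μ = 0)
    (heps : ∀ i g j k, Integrable (eps i g j k) μ ∧ ∫ ω, eps i g j k ω ∂μ = 0)
    -- second moments within each family
    (h2u : ∀ i i', Integrable (fun ω => u i ω * u i' ω) μ ∧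
      ∫ ω, u i ω * u i' ω ∂μ = if i = i' then σ32 else 0)
    (h2ug : ∀ i g i' g', Integrable (fun ω => ug i g ω * ug i' g' ω) μ ∧
      ∫ ω, ug i g ω * ug i' g' ω ∂μ = if i = i' ∧ g = g' then σ22 else 0)
    (h2uj : ∀ i g j i' g' j', Integrable (fun ω => uj i g j ω * uj i' g' j' ω) μ ∧
      ∫ ω, uj i g j ω * uj i' g' j' ω ∂μ = if i = i' ∧ g = g' ∧ j = j' then σ12 else 0)
    (h2eps : ∀ i g j k i' g' j' k', Integrable (fun ω => eps i g j k ω * eps i' g' j' k' ω) μ ∧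
      ∫ ω, eps i g j k ω * eps i' g' j' k' ω ∂μ =
        if i = i' ∧ g = g' ∧ j = j' ∧ k = k' then σe2 else 0)
    -- cross-family second moments vanish (independence)
    (hc1 : ∀ i i' g', Integrable (fun ω => u i ω * ug i' g' ω) μ ∧
      ∫ ω, u i ω * ug i' g' ω ∂μ = 0)
    (hc2 : ∀ i i' g' j', Integrable (fun ω => u i ω * uj i' g' j' ω) μ ∧
      ∫ ω, u i ω * uj i' g' j' ω ∂μ = 0)
    (hc3 : ∀ i i' g' j' k', Integrable (fun ω => u i ω * eps i' g' j' k' ω) μ ∧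
      ∫ ω, u i ω * eps i' g' j' k' ω ∂μ = 0)
    (hc4 : ∀ i g i' g' j', Integrable (fun ω => ug i g ω * uj i' g' j' ω) μ ∧
      ∫ ω, ug i g ω * uj i' g' j' ω ∂μ = 0)
    (hc5 : ∀ i g i' g' j' k', Integrable (fun ω => ug i g ω * eps i' g' j' k' ω) μ ∧
      ∫ ω, ug i g ω * eps i' g' j' k' ω ∂μ = 0)
    (hc6 : ∀ i g j i' g' j' k', Integrable (fun ω => uj i g j ω * eps i' g' j' k' ω) μ ∧
      ∫ ω, uj i g j ω * eps i' g' j' k' ω ∂μ = 0)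
    (L : Fin 2 → ℝ) (hL : L 0 = 1 ∧ L 1 = 0)
    (X : Fin (2 * N₃) → ℝ) (hX : ∀ i, X i = if (i : ℕ) < N₃ then 1 else 0)
    (Y : Fin (2 * N₃) → Fin 2 → Fin n → Fin N₁ → Ω → ℝ)
    (hY : ∀ i g j k ω, Y i g j k ω =
      β₀ + τ * L g + ξ * X i + δ * L g * X i + u i ω + ug i g ω + uj i g j ω + eps i g j k ω)
    (Ybar : Fin 2 → Bool → Ω → ℝ)
    (hYbar : ∀ g t ω, Ybar g t ω =
      (1 / (N₃ * n * N₁ : ℝ)) * ∑ i : Fin (2 * N₃), ∑ j : Fin n, ∑ k : Fin N₁,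
        (if decide ((i : ℕ) < N₃) = t then Y i g j k ω else 0)) :
    ∫ ω, (((Ybar 0 true ω - Ybar 0 false ω) - (Ybar 1 true ω - Ybar 1 false ω)) - δ)^2 ∂μ =
      4 / (N₃ * n * N₁ : ℝ) * (σe2 + N₁ * σ12 + n * N₁ * σ22) :=
  delta_hat_variance_general μ N₃ n N₁ hN₃ hn hN₁ β₀ τ ξ δ σ22 σ12 σe2 u ug uj eps h2ug h2uj h2eps
    hc4 hc5 hc6 L hL X hX Y hY Ybar hYbar
end OrthogonalFamily
end
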